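/- Suppose e₁, e₂, k̃, l̃, w̃ : ℝ → ℝ are differentiable at t and satisfy de₁/dt = −a_m·e₁ + L·e₂, de₂/dt = −(a_m + L)·e₂ + b·l̃·r − b·k̃·x + b·(k̃ + k*)·θ·e₂ + b·w̃, dk̃/dt = sgn(b)·((1 − θ)·x + θ·(x − e₂))·γ₁·m₂·e₂, dl̃/dt = −sgn(b)·r·γ₂·m₂·e₂, dw̃/dt = −sgn(b)·γ₃·m₂·e₂ at time t (for given values L, x, r, θ at time t), where b·k* = a + a_m. Then the derivative of V(t) := ½·m₁·e₁(t)² + ½·m₂·e₂(t)² + (|b|/(2γ₁))·k̃(t)² + (|b|/(2γ₂))·l̃(t)² + (|b|/(2γ₃))·w̃(t)² at t equals −(a_m·m₁·e₁(t)² − L·m₁·e₁(t)·e₂(t) + m₂·(L + a_m − θ·(a + a_m))·e₂(t)²). -/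

import Mathlib

/-! The sign in each adaptation law and the weight `|b| / (2γ)` of the matching term of `V`
combine to `|b| · sign b = b`, so the parameter-error terms of `V'` cancel exactly against the
`b · k̃`, `b · l̃`, `b · w̃` terms of `m₂ e₂ e₂'`. What survives from the blending is
`m₂ b k* θ e₂² = m₂ θ (a + aₘ) e₂²`. -/

theorem Real.abs_mul_sign (b : ℝ) : |b| * Real.sign b = b := by
  rcases lt_trichotomy b 0 with hneg | rfl | hpos
  · rw [abs_of_neg hneg, Real.sign_of_neg hneg]; ring
  · simp
  · rw [abs_of_pos hpos, Real.sign_of_pos hpos, mul_one]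

theorem HasDerivAt.abs_div_mul_sq {f : ℝ → ℝ} {f' b γ u t : ℝ} (hf : HasDerivAt f f' t)
    (hγ : γ ≠ 0) (hf' : f' = Real.sign b * γ * u) :
    HasDerivAt (fun s => |b| / (2 * γ) * f s ^ 2) (b * f t * u) t := by
  refine ((hf.pow 2).const_mul (|b| / (2 * γ))).congr_deriv ?_
  rw [hf']
  field_simp
  linear_combination 2 * f t * u * Real.abs_mul_sign b

theorem stmt_14_general
    (a aₘ b kstar m₁ m₂ γ₁ γ₂ γ₃ L x r θ t : ℝ)
    (e₁ e₂ kt lt wt : ℝ → ℝ)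
    (hγ₁ : 0 < γ₁) (hγ₂ : 0 < γ₂) (hγ₃ : 0 < γ₃)
    (hmatch : b * kstar = a + aₘ)
    (hd1 : HasDerivAt e₁ (-aₘ * e₁ t + L * e₂ t) t)
    (hd2 : HasDerivAt e₂
      (-(aₘ + L) * e₂ t + b * lt t * r - b * kt t * x
        + b * (kt t + kstar) * θ * e₂ t + b * wt t) t)
    (hd3 : HasDerivAt kt
      (Real.sign b * ((1 - θ) * x + θ * (x - e₂ t)) * γ₁ * m₂ * e₂ t) t)
    (hd4 : HasDerivAt lt (-(Real.sign b) * r * γ₂ * m₂ * e₂ t) t)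
    (hd5 : HasDerivAt wt (-(Real.sign b) * γ₃ * m₂ * e₂ t) t) :
    HasDerivAt (fun s => (1/2) * m₁ * (e₁ s) ^ 2 + (1/2) * m₂ * (e₂ s) ^ 2
        + (|b| / (2 * γ₁)) * (kt s) ^ 2 + (|b| / (2 * γ₂)) * (lt s) ^ 2
        + (|b| / (2 * γ₃)) * (wt s) ^ 2)
      (-(aₘ * m₁ * (e₁ t) ^ 2 - L * m₁ * e₁ t * e₂ t
          + m₂ * (L + aₘ - θ * (a + aₘ)) * (e₂ t) ^ 2)) t := by
  have hk := hd3.abs_div_mul_sq hγ₁.ne' (u := (x - θ * e₂ t) * m₂ * e₂ t) (by ring)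
  have hl := hd4.abs_div_mul_sq hγ₂.ne' (u := -(r * m₂ * e₂ t)) (by ring)
  have hw := hd5.abs_div_mul_sq hγ₃.ne' (u := -(m₂ * e₂ t)) (by ring)
  refine (((((hd1.pow 2).const_mul (1 / 2 * m₁)).add
    ((hd2.pow 2).const_mul (1 / 2 * m₂))).add hk).add hl).add hw |>.congr_deriv ?_
  linear_combination m₂ * θ * e₂ t ^ 2 * hmatch

/-- Derivative of the Lyapunov function (blended case).
With the blended error dynamics and adaptation laws holding at `t`, and
`b·k* = a + a_m`, the derivative of `V` at `t` equals
`−(a_m·m₁·e₁² − L·m₁·e₁·e₂ + m₂·(L + a_m − θ·(a + a_m))·e₂²)`. -/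
theorem stmt_14
    (a aₘ b kstar m₁ m₂ γ₁ γ₂ γ₃ L x r θ t : ℝ)
    (e₁ e₂ kt lt wt : ℝ → ℝ)
    (ham : 0 < aₘ) (hb : b ≠ 0)
    (hm₁ : 0 < m₁) (hm₂ : 0 < m₂)
    (hγ₁ : 0 < γ₁) (hγ₂ : 0 < γ₂) (hγ₃ : 0 < γ₃)
    (hmatch : b * kstar = a + aₘ)
    (hd1 : HasDerivAt e₁ (-aₘ * e₁ t + L * e₂ t) t)
    (hd2 : HasDerivAt e₂
      (-(aₘ + L) * e₂ t + b * lt t * r - b * kt t * x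
        + b * (kt t + kstar) * θ * e₂ t + b * wt t) t)
    (hd3 : HasDerivAt kt
      (Real.sign b * ((1 - θ) * x + θ * (x - e₂ t)) * γ₁ * m₂ * e₂ t) t)
    (hd4 : HasDerivAt lt (-(Real.sign b) * r * γ₂ * m₂ * e₂ t) t)
    (hd5 : HasDerivAt wt (-(Real.sign b) * γ₃ * m₂ * e₂ t) t) :
    HasDerivAt (fun s => (1/2) * m₁ * (e₁ s) ^ 2 + (1/2) * m₂ * (e₂ s) ^ 2
        + (|b| / (2 * γ₁)) * (kt s) ^ 2 + (|b| / (2 * γ₂)) * (lt s) ^ 2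
        + (|b| / (2 * γ₃)) * (wt s) ^ 2)
      (-(aₘ * m₁ * (e₁ t) ^ 2 - L * m₁ * e₁ t * e₂ t
          + m₂ * (L + aₘ - θ * (a + aₘ)) * (e₂ t) ^ 2)) t :=
  stmt_14_general a aₘ b kstar m₁ m₂ γ₁ γ₂ γ₃ L x r θ t e₁ e₂ kt lt wt hγ₁ hγ₂ hγ₃ hmatch hd1 hd2
    hd3 hd4 hd5
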